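/- Let π ∈ N_n. Then π ∈ N'_n (i.e., π⁻¹ avoids 321 as a consecutive pattern) if and only if the word φ(π) avoids the words bba, bbb, cba, and cbb as blocks of consecutive letters. -/

import Mathlib

/-- The one-line notation of a permutation `π` of `{1,…,n}`, read as a function on 0-based
positions: `permWord π j = π_{j+1}` (values are 1-based; out-of-range positions give `0`). -/
def permWord {n : ℕ} (π : Equiv.Perm (Fin n)) (j : ℕ) : ℕ :=
  if h : j < n then ((π ⟨j, h⟩ : Fin n) : ℕ) + 1 else 0

/-- `π` contains `σ` as a consecutive pattern: some window of consecutive letters of `π`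
has standardization `σ`, i.e. is order-isomorphic to the one-line word of `σ`. -/
def ContainsPat {n m : ℕ} (π : Equiv.Perm (Fin n)) (σ : Equiv.Perm (Fin m)) : Prop :=
  ∃ i : ℕ, i + m ≤ n ∧ ∀ j k : Fin m,
    (permWord π (i + (j : ℕ)) < permWord π (i + (k : ℕ)) ↔ permWord σ j < permWord σ k)

/-- The number of peaks of `π`: 1-based indices `i` with `2 ≤ i ≤ n-1` and
`π_{i-1} < π_i > π_{i+1}`. -/
def pkCount {n : ℕ} (π : Equiv.Perm (Fin n)) : ℕ :=
  ((Finset.Icc 2 (n - 1)).filter fun i =>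
    permWord π (i - 2) < permWord π (i - 1) ∧ permWord π i < permWord π (i - 1)).card

/-- The number of left peaks of `π`: 1-based indices `i ∈ [n-1]` that are peaks,
or `i = 1` with `π_1 > π_2`. -/
def lpkCount {n : ℕ} (π : Equiv.Perm (Fin n)) : ℕ :=
  ((Finset.Icc 1 (n - 1)).filter fun i =>
    (2 ≤ i ∧ permWord π (i - 2) < permWord π (i - 1) ∧ permWord π i < permWord π (i - 1))
      ∨ (i = 1 ∧ permWord π 1 < permWord π 0)).card

/-- The number of peaks of `π⁻¹`. -/
def ipk {n : ℕ} (π : Equiv.Perm (Fin n)) : ℕ := pkCount π⁻¹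

/-- The number of left peaks of `π⁻¹`. -/
def ilpk {n : ℕ} (π : Equiv.Perm (Fin n)) : ℕ := lpkCount π⁻¹
/-- The three-letter alphabet `{a, b, c}`. -/
inductive ABC : Type
  | a : ABC
  | b : ABC
  | c : ABC
  deriving DecidableEq, Repr

open ABC

/-- Words matching one of the alternatives `c`, `bc`, `a⁺b`, `a⁺c` of the regular
expression `(c ∪ bc ∪ a⁺b ∪ a⁺c)`. -/
def Atom (u : List ABC) : Prop :=
  u = [c] ∨ u = [b, c] ∨
    ∃ i : ℕ, 1 ≤ i ∧ (u = List.replicate i a ++ [b] ∨ u = List.replicate i a ++ [c])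

/-- Membership in `W_n`: words of length `n` of the form `a^i c u a c^j` (with `i, j ≥ 0`)
avoiding the subwords (i.e. blocks of consecutive letters) `bba`, `bbb`, `cba`, `cbb`. -/
def Wmem (n : ℕ) (w : List ABC) : Prop :=
  w.length = n ∧
  (∃ (i j : ℕ) (u : List ABC),
      w = List.replicate i a ++ [c] ++ u ++ [a] ++ List.replicate j c) ∧
  ¬ [b, b, a] <:+: w ∧ ¬ [b, b, b] <:+: w ∧ ¬ [c, b, a] <:+: w ∧ ¬ [c, b, b] <:+: w

/-- `i` is a left peak of `π` (1-based): `i ∈ [n-1]` and either `i` is a peak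
(`2 ≤ i ≤ n-1` and `π_{i-1} < π_i > π_{i+1}`) or `i = 1` and `π_1 > π_2`. -/
def IsLeftPeak {n : ℕ} (π : Equiv.Perm (Fin n)) (i : ℕ) : Prop :=
  1 ≤ i ∧ i ≤ n - 1 ∧
    ((2 ≤ i ∧ permWord π (i - 2) < permWord π (i - 1) ∧ permWord π i < permWord π (i - 1))
      ∨ (i = 1 ∧ permWord π 1 < permWord π 0))

/-- `i` is a right valley of `π` (1-based): `i ∈ {2,…,n}` and either `i` is a valley
(`i ≤ n-1` and `π_{i-1} > π_i < π_{i+1}`) or `i = n` and `π_{n-1} > π_n`. -/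
def IsRightValley {n : ℕ} (π : Equiv.Perm (Fin n)) (i : ℕ) : Prop :=
  2 ≤ i ∧ i ≤ n ∧
    ((i ≤ n - 1 ∧ permWord π (i - 1) < permWord π (i - 2) ∧ permWord π (i - 1) < permWord π i)
      ∨ (i = n ∧ permWord π (n - 1) < permWord π (n - 2)))

/-- The 1-based position of the value `p` in the one-line notation of `π`. -/
def posOf {n : ℕ} (π : Equiv.Perm (Fin n)) (p : ℕ) : ℕ := permWord π⁻¹ (p - 1)

/-- `w = φ(π)`, where `φ` is defined via the canonical decomposition `π = αβγ` (with
`α` increasing up to and including the left peak, `β` decreasing strictly between the left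
peak and the right valley, and `γ` increasing from the right valley on): the `p`-th letter
of `w` is `a`, `b`, or `c` according to whether the value `p` lies in `α`, `β`, or `γ`. -/
def IsPhi {n : ℕ} (π : Equiv.Perm (Fin n)) (w : List ABC) : Prop :=
  w.length = n ∧
  ∃ lp rv : ℕ, IsLeftPeak π lp ∧ IsRightValley π rv ∧
    ∀ p : ℕ, 1 ≤ p → p ≤ n →
      w[p - 1]? = some (if posOf π p ≤ lp then a else if posOf π p < rv then b else c)

/-! A permutation with a unique left peak rises up to it, falls down to the right valley and rises
again afterwards, because walking left along a run of descents always ends at a left peak.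
So the value `p + 1` stands left of `p` exactly when `p` lies after the left peak and `p + 1`
before the right valley, i.e. when `φ(π)_p ≠ a` and `φ(π)_{p+1} ≠ c`. A consecutive `321` in
`π⁻¹` is a pair of such inverse descents at `p` and `p + 1`, that is
`φ(π)_p ≠ a`, `φ(π)_{p+1} = b`, `φ(π)_{p+2} ≠ c`: one of the words `bba`, `bbb`, `cba`, `cbb`. -/

section UpDownUp

variable {α : Type*} [LinearOrder α] {f : ℕ → α} {n L : ℕ}

-- The 0-based counterpart of `IsLeftPeak`, for the word `f 0, …, f (n - 1)`.
def IsLeftPeakAt (f : ℕ → α) (n t : ℕ) : Prop :=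
  t + 1 < n ∧ f (t + 1) < f t ∧ (t = 0 ∨ f (t - 1) < f t)

lemma lt_or_lt_succ_of_injOn (hf : Set.InjOn f (Set.Iio n)) {j : ℕ} (hj : j + 1 < n) :
    f j < f (j + 1) ∨ f (j + 1) < f j :=
  lt_or_gt_of_ne fun h => by
    have := hf (Set.mem_Iio.mpr (by omega)) (Set.mem_Iio.mpr hj) h
    omega

lemma exists_isLeftPeakAt_of_descent (hf : Set.InjOn f (Set.Iio n)) :
    ∀ {j : ℕ}, j + 1 < n → f (j + 1) < f j →
      ∃ t ≤ j, IsLeftPeakAt f n t ∧ ∀ i, t ≤ i → i ≤ j → f (i + 1) < f i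
  | 0, hj, hd => ⟨0, le_rfl, ⟨hj, hd, Or.inl rfl⟩, fun i _ hi => by rwa [Nat.le_zero.mp hi]⟩
  | j + 1, hj, hd => by
    rcases lt_or_lt_succ_of_injOn hf (j := j) (by omega) with hup | hdown
    · exact ⟨j + 1, le_rfl, ⟨hj, hd, Or.inr hup⟩, fun i h₁ h₂ => by rwa [le_antisymm h₂ h₁]⟩
    · obtain ⟨t, htj, ht, hrun⟩ := exists_isLeftPeakAt_of_descent hf (by omega) hdown
      refine ⟨t, by omega, ht, fun i h₁ h₂ => ?_⟩
      rcases Nat.lt_or_eq_of_le h₂ with h | rfl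
      · exact hrun i h₁ (by omega)
      · exact hd

lemma lt_iff_of_strictMonoOn_strictAntiOn_strictMonoOn {R m x y : ℕ}
    (h₁ : StrictMonoOn f (Set.Iic L)) (h₂ : StrictAntiOn f (Set.Icc L R))
    (h₃ : StrictMonoOn f (Set.Icc R m)) (hx : x ≤ m) (hxy : f x < f y) :
    y < x ↔ L < x ∧ y < R := by
  constructor
  · intro hyx
    refine ⟨lt_of_not_ge fun hxL => ?_, lt_of_not_ge fun hRy => ?_⟩
    · exact lt_asymm hxy (h₁ (hyx.le.trans hxL) hxL hyx)
    · exact lt_asymm hxy (h₃ ⟨hRy, (hyx.trans_le hx).le⟩ ⟨hRy.trans hyx.le, hx⟩ hyx)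
  · rintro ⟨hLx, hyR⟩
    by_contra! hxy'
    exact hxy.not_ge (h₂.antitoneOn ⟨hLx.le, hxy'.trans hyR.le⟩ ⟨hLx.le.trans hxy', hyR.le⟩ hxy')

variable (hf : Set.InjOn f (Set.Iio n)) (hL : ∀ t, IsLeftPeakAt f n t ↔ t = L)
include hf hL

lemma strictAntiOn_Icc_of_descent {j : ℕ} (hj : j + 1 < n) (hd : f (j + 1) < f j) :
    L ≤ j ∧ StrictAntiOn f (Set.Icc L (j + 1)) := by
  obtain ⟨t, htj, ht, hrun⟩ := exists_isLeftPeakAt_of_descent hf hj hd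
  obtain rfl := (hL t).mp ht
  refine ⟨htj, strictAntiOn_of_succ_lt Set.ordConnected_Icc fun i _ hi hi' => ?_⟩
  rw [Order.succ_eq_add_one, Set.mem_Icc] at *
  exact hrun i hi.1 (by omega)

lemma strictMonoOn_Iic_of_isLeftPeakAt_iff : StrictMonoOn f (Set.Iic L) := by
  have hLn : L + 1 < n := ((hL L).mpr rfl).1
  refine strictMonoOn_of_lt_succ Set.ordConnected_Iic fun i _ _ hi => ?_
  rw [Order.succ_eq_add_one, Set.mem_Iic] at *
  rcases lt_or_lt_succ_of_injOn hf (j := i) (by omega) with h | h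
  · exact h
  · exact absurd (strictAntiOn_Icc_of_descent hf hL (by omega) h).1 (by omega)

lemma strictMonoOn_Icc_of_rightValley {R : ℕ} (hR : 0 < R) (hRn : R < n)
    (hdR : f R < f (R - 1)) (hup : R + 1 < n → f R < f (R + 1)) :
    StrictMonoOn f (Set.Icc R (n - 1)) := by
  have hLR : L ≤ R - 1 :=
    (strictAntiOn_Icc_of_descent hf hL (j := R - 1) (by omega) (by rwa [Nat.sub_add_cancel hR])).1
  refine strictMonoOn_of_lt_succ Set.ordConnected_Icc fun i _ hi hi' => ?_
  rw [Order.succ_eq_add_one, Set.mem_Icc] at *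
  rcases lt_or_lt_succ_of_injOn hf (j := i) (by omega) with h | h
  · exact h
  · have hanti := (strictAntiOn_Icc_of_descent hf hL (by omega) h).2
    exact absurd (hanti ⟨by omega, by omega⟩ ⟨by omega, by omega⟩ (Nat.lt_succ_self R))
      (lt_asymm (hup (by omega)))

end UpDownUp

section Perm

variable {n : ℕ} {π : Equiv.Perm (Fin n)} {lp rv : ℕ}

lemma permWord_of_lt {j : ℕ} (hj : j < n) : permWord π j = π ⟨j, hj⟩ + 1 := dif_pos hj

lemma permWord_injOn : Set.InjOn (permWord π) (Set.Iio n) := fun j hj k hk h => by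
  rw [Set.mem_Iio] at hj hk
  rw [permWord_of_lt hj, permWord_of_lt hk, add_left_inj, Fin.val_inj, π.apply_eq_iff_eq] at h
  exact congrArg Fin.val h

lemma permWord_mem_Icc {j : ℕ} (hj : j < n) : permWord π j ∈ Set.Icc 1 n := by
  rw [permWord_of_lt hj]
  exact ⟨Nat.le_add_left 1 _, (π ⟨j, hj⟩).isLt⟩

lemma permWord_permWord_inv {v : ℕ} (hv : v < n) : permWord π (permWord π⁻¹ v - 1) = v + 1 := by
  rw [permWord_of_lt hv, Nat.add_sub_cancel, permWord_of_lt (Fin.isLt _)]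
  simp

lemma isLeftPeak_succ_iff {t : ℕ} : IsLeftPeak π (t + 1) ↔ IsLeftPeakAt (permWord π) n t := by
  rcases t with _ | t <;> simp [IsLeftPeak, IsLeftPeakAt] <;> omega

lemma IsLeftPeak.eq_of_lpkCount_eq_one (hπ : lpkCount π = 1) {i j : ℕ} (hi : IsLeftPeak π i)
    (hj : IsLeftPeak π j) : i = j :=
  Finset.card_le_one.mp hπ.le i (Finset.mem_filter.mpr ⟨Finset.mem_Icc.mpr ⟨hi.1, hi.2.1⟩, hi.2.2⟩)
    j (Finset.mem_filter.mpr ⟨Finset.mem_Icc.mpr ⟨hj.1, hj.2.1⟩, hj.2.2⟩)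

lemma isLeftPeakAt_iff_of_lpkCount_eq_one (hπ : lpkCount π = 1) (hlp : IsLeftPeak π lp) (t : ℕ) :
    IsLeftPeakAt (permWord π) n t ↔ t = lp - 1 := by
  rw [← isLeftPeak_succ_iff]
  constructor
  · intro ht
    have := hlp.eq_of_lpkCount_eq_one hπ ht
    omega
  · rintro rfl
    rwa [Nat.sub_add_cancel hlp.1]

lemma strictMonoOn_strictAntiOn_strictMonoOn_of_lpkCount_eq_one (hπ : lpkCount π = 1)
    (hlp : IsLeftPeak π lp) (hrv : IsRightValley π rv) :
    lp < rv ∧ StrictMonoOn (permWord π) (Set.Iic (lp - 1)) ∧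
      StrictAntiOn (permWord π) (Set.Icc (lp - 1) (rv - 1)) ∧
      StrictMonoOn (permWord π) (Set.Icc (rv - 1) (n - 1)) := by
  have hL := isLeftPeakAt_iff_of_lpkCount_eq_one hπ hlp
  obtain ⟨hrv2, hrvn, hvalley⟩ := hrv
  have hdesc : permWord π (rv - 2 + 1) < permWord π (rv - 2) := by
    rw [show rv - 2 + 1 = rv - 1 by omega]
    rcases hvalley with ⟨-, h, -⟩ | ⟨rfl, h⟩ <;> exact h
  have hup : rv - 1 + 1 < n → permWord π (rv - 1) < permWord π (rv - 1 + 1) := by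
    rw [show rv - 1 + 1 = rv by omega]
    rcases hvalley with ⟨-, -, h⟩ | ⟨rfl, -⟩
    · exact fun _ => h
    · exact fun h => absurd h (lt_irrefl _)
  obtain ⟨hlprv, hdown⟩ := strictAntiOn_Icc_of_descent permWord_injOn hL (by omega) hdesc
  rw [show rv - 2 + 1 = rv - 1 by omega] at hdesc hdown
  refine ⟨by have := hlp.1; omega, strictMonoOn_Iic_of_isLeftPeakAt_iff permWord_injOn hL, hdown,
    strictMonoOn_Icc_of_rightValley permWord_injOn hL (by omega) (by omega) ?_ hup⟩
  rwa [show rv - 1 - 1 = rv - 2 by omega]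

lemma permWord_inv_succ_lt_iff (hπ : lpkCount π = 1) (hlp : IsLeftPeak π lp)
    (hrv : IsRightValley π rv) {v : ℕ} (hv : v + 1 < n) :
    permWord π⁻¹ (v + 1) < permWord π⁻¹ v ↔ lp < permWord π⁻¹ v ∧ permWord π⁻¹ (v + 1) < rv := by
  obtain ⟨-, hup₁, hdown, hup₂⟩ :=
    strictMonoOn_strictAntiOn_strictMonoOn_of_lpkCount_eq_one hπ hlp hrv
  obtain ⟨hx₁, hx₂⟩ := permWord_mem_Icc (π := π⁻¹) (j := v) (by omega)
  obtain ⟨hy₁, hy₂⟩ := permWord_mem_Icc (π := π⁻¹) (j := v + 1) hv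
  have key := lt_iff_of_strictMonoOn_strictAntiOn_strictMonoOn hup₁ hdown hup₂
    (x := permWord π⁻¹ v - 1) (y := permWord π⁻¹ (v + 1) - 1) (by omega)
    (by rw [permWord_permWord_inv (by omega), permWord_permWord_inv hv]; omega)
  have := hlp.1
  omega

end Perm

-- The letter of `φ(π)` at a value whose 1-based position in `π` is `q`.
def phiLetter (lp rv q : ℕ) : ABC :=
  if q ≤ lp then a else if q < rv then b else c

section phiLetter

variable {lp rv q : ℕ}

lemma phiLetter_ne_a_iff : phiLetter lp rv q ≠ a ↔ lp < q := by
  unfold phiLetter; split_ifs <;> simp <;> omega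

lemma phiLetter_eq_b_iff : phiLetter lp rv q = b ↔ lp < q ∧ q < rv := by
  unfold phiLetter; split_ifs <;> simp <;> omega

lemma phiLetter_ne_c_iff (h : lp < rv) : phiLetter lp rv q ≠ c ↔ q < rv := by
  unfold phiLetter; split_ifs <;> simp <;> omega

end phiLetter

lemma List.infix_three_iff {β : Type*} {w : List β} {l : ℕ → β}
    (hw : ∀ k < w.length, w[k]? = some (l k)) {x y z : β} :
    [x, y, z] <:+: w ↔ ∃ k, k + 2 < w.length ∧ l k = x ∧ l (k + 1) = y ∧ l (k + 2) = z := by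
  rw [List.infix_iff_getElem?]
  constructor
  · rintro ⟨k, hk, h⟩
    simp only [List.length_cons, List.length_nil] at hk
    have h₀ := h 0 (by simp)
    have h₁ := h 1 (by simp)
    have h₂ := h 2 (by simp)
    rw [hw _ (by omega)] at h₀ h₁ h₂
    simp only [zero_add, Option.some.injEq] at h₀ h₁ h₂
    exact ⟨k, by omega, h₀, by rwa [add_comm], by rwa [add_comm]⟩
  · rintro ⟨k, hk, rfl, rfl, rfl⟩
    refine ⟨k, by simp; omega, fun i hi => ?_⟩
    rw [hw _ (by simp at hi; omega)]
    simp at hi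
    interval_cases i <;> simp [add_comm]

lemma forbidden_infix_iff {w : List ABC} {l : ℕ → ABC}
    (hw : ∀ k < w.length, w[k]? = some (l k)) :
    ([b, b, a] <:+: w ∨ [b, b, b] <:+: w ∨ [c, b, a] <:+: w ∨ [c, b, b] <:+: w) ↔
      ∃ k, k + 2 < w.length ∧ l k ≠ a ∧ l (k + 1) = b ∧ l (k + 2) ≠ c := by
  simp only [List.infix_three_iff hw, ← exists_or]
  refine exists_congr fun k => ?_
  cases l k <;> cases l (k + 2) <;> simp

lemma containsPat_revPerm_three_iff {n : ℕ} (σ : Equiv.Perm (Fin n)) :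
    ContainsPat σ (Fin.revPerm : Equiv.Perm (Fin 3)) ↔
      ∃ i, i + 2 < n ∧ permWord σ (i + 1) < permWord σ i ∧
        permWord σ (i + 2) < permWord σ (i + 1) := by
  have hrev : StrictAnti fun j : Fin 3 => permWord (Fin.revPerm : Equiv.Perm (Fin 3)) j :=
    Fin.strictAnti_iff_succ_lt.mpr (by decide)
  constructor
  · rintro ⟨i, hi, h⟩
    exact ⟨i, by omega, (h 1 0).mpr (by decide), (h 2 1).mpr (by decide)⟩
  · rintro ⟨i, hi, h₁, h₂⟩
    have hwin : StrictAnti fun j : Fin 3 => permWord σ (i + j) :=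
      Fin.strictAnti_iff_succ_lt.mpr fun j => by fin_cases j <;> assumption
    exact ⟨i, by omega, fun j k => hwin.lt_iff_gt.trans hrev.lt_iff_gt.symm⟩

/-- **Lemma 10 (Troyka–Zhuang).** Let `π ∈ N_n` (exactly one left peak). Then `π⁻¹` avoids
`321` as a consecutive pattern if and only if `φ(π)` avoids the subwords `bba`, `bbb`,
`cba`, `cbb`. (Here `φ(π)` is encoded relationally by `IsPhi`.) -/
theorem stmt13 (n : ℕ) (π : Equiv.Perm (Fin n)) (hπ : lpkCount π = 1)
    (w : List ABC) (hw : IsPhi π w) :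
    ¬ ContainsPat π⁻¹ (Fin.revPerm : Equiv.Perm (Fin 3)) ↔
      (¬ [b, b, a] <:+: w ∧ ¬ [b, b, b] <:+: w ∧ ¬ [c, b, a] <:+: w ∧ ¬ [c, b, b] <:+: w) := by
  obtain ⟨hlen, lp, rv, hlp, hrv, hletter⟩ := hw
  have hlprv := (strictMonoOn_strictAntiOn_strictMonoOn_of_lpkCount_eq_one hπ hlp hrv).1
  have hw : ∀ k < w.length, w[k]? = some (phiLetter lp rv (permWord π⁻¹ k)) := fun k hk => by
    simpa [posOf, phiLetter] using hletter (k + 1) (by omega) (by omega)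
  simp only [← not_or]
  rw [not_iff_not, containsPat_revPerm_three_iff, forbidden_infix_iff hw, hlen]
  refine exists_congr fun v => and_congr_right fun hv => ?_
  rw [permWord_inv_succ_lt_iff hπ hlp hrv (by omega), permWord_inv_succ_lt_iff hπ hlp hrv hv,
    phiLetter_ne_a_iff, phiLetter_eq_b_iff, phiLetter_ne_c_iff hlprv]
  tauto
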